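/- arXiv:1304.0499 — 3 statements merged into one kernel-verified Lean document; each statement's English description precedes it below -/
import Mathlib

section
/- The unique minimizer U(γ) of F_γ depends continuously on γ ∈ [0,∞); i.e., the solution path γ ↦ U(γ) is a continuous function. -/
/-! The fidelity term `½ ∑ ‖x i - U i‖²` is the squared distance to `x` in the ℓ²-product, hence
`1`-strongly convex, and the fusion penalty `g` is a nonnegative convex function (a weighted sum of
seminorms of differences). So `U(γ)` minimises the `1`-strongly convex `f + γ g`, and testing the
minimality of `U(γ)` against `U(γ')` and vice versa gives
`¼ ‖U(γ) - U(γ')‖² ≤ (γ - γ') (g U(γ') - g U(γ))`. As `γ ↦ g U(γ)` is nonincreasing and `g ≥ 0`,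
the right side is at most `g U(0) |γ - γ'|`: the path is `½`-Hölder. -/

open Finset Set Filter Topology

lemma ConvexOn.sum {E ι : Type*} [AddCommMonoid E] [Module ℝ E] {s : Set E} {t : Finset ι}
    {f : ι → E → ℝ} (hs : Convex ℝ s) (hf : ∀ i ∈ t, ConvexOn ℝ s (f i)) :
    ConvexOn ℝ s fun x ↦ ∑ i ∈ t, f i x := by
  classical
  induction t using Finset.induction_on with
  | empty => simpa using convexOn_const 0 hs
  | insert i t hi ih =>
    simp_rw [Finset.sum_insert hi]
    exact (hf i (Finset.mem_insert_self i t)).add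
      (ih fun j hj ↦ hf j (Finset.mem_insert_of_mem hj))

section StrongConvexity

variable {E : Type*} [NormedAddCommGroup E] [NormedSpace ℝ E] {s : Set E} {f g : E → ℝ} {m : ℝ}

lemma StrongConvexOn.add_convexOn (hf : StrongConvexOn s m f) (hg : ConvexOn ℝ s g) :
    StrongConvexOn s m (f + g) := by
  unfold StrongConvexOn
  simpa using hf.add (uniformConvexOn_zero.2 hg)

-- Only the midpoint inequality is used, hence `m / 4` rather than the optimal `m / 2`.
lemma StrongConvexOn.add_norm_sub_sq_le_of_isMinOn {u v : E} (hf : StrongConvexOn s m f)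
    (hmin : IsMinOn f s u) (hu : u ∈ s) (hv : v ∈ s) :
    f u + m / 4 * ‖u - v‖ ^ 2 ≤ f v := by
  have hmid := hf.2 hu hv (by norm_num : (0 : ℝ) ≤ 1 / 2) (by norm_num : (0 : ℝ) ≤ 1 / 2)
    (by norm_num)
  have hle : f u ≤ f ((1 / 2 : ℝ) • u + (1 / 2 : ℝ) • v) :=
    hmin (hf.1 hu hv (by norm_num) (by norm_num) (by norm_num))
  simp only [smul_eq_mul] at hmid
  linarith

lemma strongConvexOn_half_norm_sub_sq {F : Type*} [NormedAddCommGroup F] [InnerProductSpace ℝ F]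
    (a : F) : StrongConvexOn univ 1 fun x : F ↦ 1 / 2 * ‖a - x‖ ^ 2 := by
  rw [strongConvexOn_iff_convex]
  have haffine : (fun x : F ↦ 1 / 2 * ‖a - x‖ ^ 2 - 1 / 2 * ‖x‖ ^ 2) =
      fun x ↦ 1 / 2 * ‖a‖ ^ 2 + -(innerₛₗ ℝ a) x := by
    ext x
    rw [norm_sub_sq_real, innerₛₗ_apply_apply]
    ring
  rw [haffine]
  exact (convexOn_const _ convex_univ).add ((-(innerₛₗ ℝ a)).convexOn convex_univ)

end StrongConvexity

section PenalizedPath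

variable {E : Type*} {f g : E → ℝ} {u : ℝ → E}

lemma antitoneOn_comp_of_isMinOn_add_smul (hu : ∀ γ, 0 ≤ γ → IsMinOn (f + γ • g) univ (u γ)) :
    AntitoneOn (g ∘ u) (Ici 0) := by
  intro γ' hγ' γ hγ hle
  have h := hu γ hγ (mem_univ (u γ'))
  have h' := hu γ' hγ' (mem_univ (u γ))
  simp only [mem_ofPred_eq, Pi.add_apply, Pi.smul_apply, smul_eq_mul] at h h'
  rcases hle.eq_or_lt with rfl | hlt
  · exact le_rfl
  · simp only [Function.comp_apply]
    nlinarith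

variable [NormedAddCommGroup E] [NormedSpace ℝ E] {m : ℝ}

lemma StrongConvexOn.mul_norm_sub_sq_le_of_isMinOn_add_smul (hf : StrongConvexOn univ m f)
    (hg : ConvexOn ℝ univ g) (hu : ∀ γ, 0 ≤ γ → IsMinOn (f + γ • g) univ (u γ))
    {γ γ' : ℝ} (hγ : 0 ≤ γ) (hγ' : 0 ≤ γ') :
    m / 4 * ‖u γ - u γ'‖ ^ 2 ≤ (γ - γ') * (g (u γ') - g (u γ)) := by
  have h := (hf.add_convexOn (hg.smul hγ)).add_norm_sub_sq_le_of_isMinOn (hu γ hγ) (mem_univ _)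
    (mem_univ (u γ'))
  have h' := hu γ' hγ' (mem_univ (u γ))
  simp only [mem_ofPred_eq, Pi.add_apply, Pi.smul_apply, smul_eq_mul] at h h'
  linarith

lemma StrongConvexOn.norm_sub_sq_le_of_isMinOn_add_smul (hf : StrongConvexOn univ m f)
    (hm : 0 < m) (hg : ConvexOn ℝ univ g) (hg₀ : ∀ x, 0 ≤ g x)
    (hu : ∀ γ, 0 ≤ γ → IsMinOn (f + γ • g) univ (u γ)) {γ γ' : ℝ} (hγ : 0 ≤ γ) (hγ' : 0 ≤ γ') :
    ‖u γ - u γ'‖ ^ 2 ≤ 4 / m * g (u 0) * |γ - γ'| := by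
  have hγ_le : g (u γ) ≤ g (u 0) := antitoneOn_comp_of_isMinOn_add_smul hu self_mem_Ici hγ hγ
  have hγ'_le : g (u γ') ≤ g (u 0) :=
    antitoneOn_comp_of_isMinOn_add_smul hu self_mem_Ici hγ' hγ'
  have hdiff : |g (u γ') - g (u γ)| ≤ g (u 0) := by
    rw [abs_sub_le_iff]
    constructor <;> linarith [hg₀ (u γ), hg₀ (u γ')]
  have hsq : m / 4 * ‖u γ - u γ'‖ ^ 2 ≤ |γ - γ'| * g (u 0) :=
    calc m / 4 * ‖u γ - u γ'‖ ^ 2 ≤ (γ - γ') * (g (u γ') - g (u γ)) :=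
          hf.mul_norm_sub_sq_le_of_isMinOn_add_smul hg hu hγ hγ'
      _ ≤ |γ - γ'| * |g (u γ') - g (u γ)| := by rw [← abs_mul]; exact le_abs_self _
      _ ≤ |γ - γ'| * g (u 0) := by gcongr
  calc ‖u γ - u γ'‖ ^ 2 = 4 / m * (m / 4 * ‖u γ - u γ'‖ ^ 2) := by field_simp
    _ ≤ 4 / m * (|γ - γ'| * g (u 0)) := mul_le_mul_of_nonneg_left hsq (by positivity)
    _ = 4 / m * g (u 0) * |γ - γ'| := by ring

theorem StrongConvexOn.continuousOn_of_isMinOn_add_smul (hf : StrongConvexOn univ m f)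
    (hm : 0 < m) (hg : ConvexOn ℝ univ g) (hg₀ : ∀ x, 0 ≤ g x)
    (hu : ∀ γ, 0 ≤ γ → IsMinOn (f + γ • g) univ (u γ)) : ContinuousOn u (Ici 0) := by
  intro γ₀ hγ₀
  rw [ContinuousWithinAt, tendsto_iff_norm_sub_tendsto_zero]
  have hbound : ∀ γ ∈ Ici (0 : ℝ), ‖u γ - u γ₀‖ ≤ √(4 / m * g (u 0) * |γ - γ₀|) := fun γ hγ ↦
    Real.le_sqrt_of_sq_le (hf.norm_sub_sq_le_of_isMinOn_add_smul hm hg hg₀ hu hγ hγ₀)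
  have hlim : Tendsto (fun γ ↦ √(4 / m * g (u 0) * |γ - γ₀|)) (𝓝[Ici 0] γ₀) (𝓝 0) := by
    have hcont : Continuous fun γ ↦ √(4 / m * g (u 0) * |γ - γ₀|) := by fun_prop
    simpa using (hcont.tendsto γ₀).mono_left nhdsWithin_le_nhds
  exact squeeze_zero' (Eventually.of_forall fun _ ↦ norm_nonneg _)
    (eventually_nhdsWithin_of_forall hbound) hlim

end PenalizedPath

theorem stmt_1_general {n p : ℕ} (x : Fin n → EuclideanSpace ℝ (Fin p))
    (w : Fin n → Fin n → ℝ) (hw : ∀ i j, 0 ≤ w i j)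
    (N : EuclideanSpace ℝ (Fin p) → ℝ)
    (hN2 : ∀ (a : ℝ) v, N (a • v) = |a| * N v)
    (hN3 : ∀ u v, N (u + v) ≤ N u + N v)
    (F : ℝ → (Fin n → EuclideanSpace ℝ (Fin p)) → ℝ)
    (hF : ∀ γ U, F γ U = (1/2) * ∑ i, ‖x i - U i‖^2 +
      γ * ∑ q ∈ Finset.univ.filter (fun q : Fin n × Fin n => q.1 < q.2),
        w q.1 q.2 * N (U q.1 - U q.2))
    (Usol : ℝ → (Fin n → EuclideanSpace ℝ (Fin p)))
    (hUsol : ∀ γ ∈ Set.Ici (0 : ℝ), ∀ V, F γ (Usol γ) ≤ F γ V) :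
    ContinuousOn Usol (Set.Ici (0 : ℝ)) := by
  let ν : Seminorm ℝ (EuclideanSpace ℝ (Fin p)) :=
    Seminorm.of N hN3 fun a v ↦ by rw [hN2, Real.norm_eq_abs]
  -- `Fin n → _` carries the sup norm; the strong convexity lives on the ℓ²-product.
  let E := PiLp 2 fun _ : Fin n ↦ EuclideanSpace ℝ (Fin p)
  let g : E → ℝ := fun U ↦ ∑ q ∈ Finset.univ.filter (fun q : Fin n × Fin n => q.1 < q.2),
    w q.1 q.2 * ν (U q.1 - U q.2)
  have hF_eq : ∀ γ (U : E),
      F γ (WithLp.ofLp U) = 1 / 2 * ‖WithLp.toLp 2 x - U‖ ^ 2 + γ * g U := by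
    intro γ U
    rw [hF, PiLp.norm_sq_eq_of_L2]
    rfl
  let π : Fin n → E →ₗ[ℝ] EuclideanSpace ℝ (Fin p) := PiLp.projₗ 2 _
  have hdiff : ∀ i j, ConvexOn ℝ univ fun U : E ↦ ν (U i - U j) := fun i j ↦
    ν.convexOn.comp_linearMap (π i - π j)
  have hg : ConvexOn ℝ univ g :=
    ConvexOn.sum convex_univ fun q _ ↦ (hdiff q.1 q.2).smul (hw q.1 q.2)
  have hg₀ : ∀ U, 0 ≤ g U := fun U ↦
    Finset.sum_nonneg fun q _ ↦ mul_nonneg (hw q.1 q.2) (apply_nonneg _ _)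
  have hpath := (strongConvexOn_half_norm_sub_sq _).continuousOn_of_isMinOn_add_smul
    one_pos hg hg₀ (u := fun γ ↦ WithLp.toLp 2 (Usol γ)) fun γ hγ V _ ↦ by
      have hmin := hUsol γ hγ (WithLp.ofLp V)
      rwa [← WithLp.ofLp_toLp 2 (Usol γ), hF_eq, hF_eq] at hmin
  exact (PiLp.continuous_ofLp 2 _).comp_continuousOn hpath

/-- the unique minimizer U(γ) of F_γ depends continuously on γ ∈ [0,∞). -/
theorem stmt_1 {n p : ℕ} (x : Fin n → EuclideanSpace ℝ (Fin p))
    (w : Fin n → Fin n → ℝ) (hw : ∀ i j, 0 ≤ w i j)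
    (N : EuclideanSpace ℝ (Fin p) → ℝ)
    (hN1 : ∀ v, N v = 0 ↔ v = 0)
    (hN2 : ∀ (a : ℝ) v, N (a • v) = |a| * N v)
    (hN3 : ∀ u v, N (u + v) ≤ N u + N v)
    (F : ℝ → (Fin n → EuclideanSpace ℝ (Fin p)) → ℝ)
    (hF : ∀ γ U, F γ U = (1/2) * ∑ i, ‖x i - U i‖^2 +
      γ * ∑ q ∈ Finset.univ.filter (fun q : Fin n × Fin n => q.1 < q.2),
        w q.1 q.2 * N (U q.1 - U q.2))
    (Usol : ℝ → (Fin n → EuclideanSpace ℝ (Fin p)))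
    (hUsol : ∀ γ ∈ Set.Ici (0 : ℝ), ∀ V, F γ (Usol γ) ≤ F γ V) :
    ContinuousOn Usol (Set.Ici (0 : ℝ)) :=
  stmt_1_general x w hw N hN2 hN3 F hF Usol hUsol
end

section
/- For fixed γ > 0, the unique minimizer of F_γ depends continuously on the weight vector w = (w_{ij}) ∈ [0,∞)^{n(n−1)/2}. -/
/-!
View the objective as `G_w(U) = ½‖x - U‖² + γ P_w(U)` on the Hilbert space `ℓ²(Fin n; ℝᵖ)`,
where the fusion penalty `P_w` is convex for `w ≥ 0`. Midpoint convexity and the parallelogram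
law give quadratic growth around the minimiser: `G_w(U_w) + ¼‖U_w - V‖² ≤ G_w(V)`. Adding this
for `w` at `V = U_{w'}` and for `w'` at `V = U_w`, the quadratic terms cancel and
`½‖U_w - U_{w'}‖² ≤ γ (P_{w'-w}(U_w) - P_{w'-w}(U_{w'}))`. As `N` is a norm on a
finite-dimensional space, `N ≤ C‖·‖`, so `P_{w'-w}` is `2C ∑ |w' - w|`-Lipschitz, whence
`‖U_w - U_{w'}‖ ≤ 4γC ∑ |w' - w|`.
-/

open Finset

theorem continuousOn_of_norm_sub_le {X E : Type*} [TopologicalSpace X] [SeminormedAddCommGroup E]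
    {f : X → E} {s : Set X} (d : X → X → ℝ) (hd : ∀ a, Continuous (d a))
    (hd_self : ∀ a, d a a = 0) (hf : ∀ a ∈ s, ∀ b ∈ s, ‖f b - f a‖ ≤ d a b) :
    ContinuousOn f s := by
  intro a ha
  rw [ContinuousWithinAt, tendsto_iff_norm_sub_tendsto_zero]
  refine squeeze_zero' (Filter.Eventually.of_forall fun _ => norm_nonneg _)
    (eventually_nhdsWithin_of_forall fun b hb => hf a ha b hb) ?_
  simpa [hd_self] using ((hd a).tendsto a).mono_left nhdsWithin_le_nhds

section Prox

variable {H : Type*} [NormedAddCommGroup H] [InnerProductSpace ℝ H]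

noncomputable def proxObjective (φ : H → ℝ) (x v : H) : ℝ := ‖x - v‖ ^ 2 / 2 + φ v

theorem proxObjective_add_le_of_isMinOn {φ : H → ℝ} (hφ : ConvexOn ℝ Set.univ φ) {x u : H}
    (hu : IsMinOn (proxObjective φ x) Set.univ u) (v : H) :
    proxObjective φ x u + ‖u - v‖ ^ 2 / 4 ≤ proxObjective φ x v := by
  set m : H := (1 / 2 : ℝ) • u + (1 / 2 : ℝ) • v
  have hφm : φ m ≤ (1 / 2) * φ u + (1 / 2) * φ v :=
    hφ.2 (Set.mem_univ u) (Set.mem_univ v) (by norm_num) (by norm_num) (by norm_num)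
  have hparallelogram : ‖x - m‖ ^ 2 = ‖x - u‖ ^ 2 / 2 + ‖x - v‖ ^ 2 / 2 - ‖u - v‖ ^ 2 / 4 := by
    have h := parallelogram_law_with_norm ℝ (x - u) (x - v)
    have hsum : x - u + (x - v) = (2 : ℝ) • (x - m) := by simp only [m]; module
    have hdiff : x - u - (x - v) = -(u - v) := by abel
    rw [hsum, hdiff, norm_neg, norm_smul, Real.norm_two] at h
    linarith
  have hmin : proxObjective φ x u ≤ proxObjective φ x m := hu (Set.mem_univ m)
  simp only [proxObjective] at hmin ⊢
  linarith

theorem norm_sub_le_of_isMinOn_proxObjective {φ ψ : H → ℝ} (hφ : ConvexOn ℝ Set.univ φ)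
    (hψ : ConvexOn ℝ Set.univ ψ) {x u u' : H} (hu : IsMinOn (proxObjective φ x) Set.univ u)
    (hu' : IsMinOn (proxObjective ψ x) Set.univ u') {L : ℝ} (hL0 : 0 ≤ L)
    (hL : (φ u' - ψ u') - (φ u - ψ u) ≤ L * ‖u - u'‖) :
    ‖u - u'‖ ≤ 2 * L := by
  have h := proxObjective_add_le_of_isMinOn hφ hu u'
  have h' := proxObjective_add_le_of_isMinOn hψ hu' u
  rw [norm_sub_rev u' u] at h'
  simp only [proxObjective] at h h'
  nlinarith [norm_nonneg (u - u')]

end Prox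

section FusionPenalty

variable {ι E : Type*} [Fintype ι] [LinearOrder ι]

def fusionPenalty [AddCommGroup E] (N : E → ℝ) (w : ι → ι → ℝ) (U : ι → E) : ℝ :=
  ∑ q ∈ univ.filter (fun q : ι × ι => q.1 < q.2), w q.1 q.2 * N (U q.1 - U q.2)

theorem fusionPenalty_sub [AddCommGroup E] (N : E → ℝ) (w w' : ι → ι → ℝ) (U : ι → E) :
    fusionPenalty N w U - fusionPenalty N w' U = fusionPenalty N (w - w') U := by
  simp only [fusionPenalty, ← sum_sub_distrib, ← sub_mul, Pi.sub_apply]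

theorem convexOn_fusionPenalty [AddCommGroup E] [Module ℝ E] (s : Seminorm ℝ E)
    {w : ι → ι → ℝ} (hw : ∀ i j, 0 ≤ w i j) : ConvexOn ℝ Set.univ (fusionPenalty s w) := by
  let diff (q : ι × ι) : (ι → E) →ₗ[ℝ] E :=
    LinearMap.proj (R := ℝ) (φ := fun _ : ι => E) q.1 - LinearMap.proj q.2
  have hsum : fusionPenalty s w =
      ∑ q ∈ univ.filter (fun q : ι × ι => q.1 < q.2), fun U => w q.1 q.2 * s (diff q U) := by
    ext U
    simp [fusionPenalty, diff]
  rw [hsum]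
  refine sum_induction _ (ConvexOn ℝ Set.univ) (fun _ _ => ConvexOn.add)
    (convexOn_const 0 convex_univ) fun q _ => ?_
  exact (s.convexOn.comp_linearMap (diff q)).smul (hw q.1 q.2)

theorem abs_fusionPenalty_sub_le [SeminormedAddCommGroup E] [NormedSpace ℝ E]
    (s : Seminorm ℝ E) {C : ℝ} (hC0 : 0 ≤ C) (hC : ∀ v, s v ≤ C * ‖v‖) (c : ι → ι → ℝ)
    (U V : ι → E) :
    |fusionPenalty s c U - fusionPenalty s c V| ≤
      2 * C * (∑ q ∈ univ.filter (fun q : ι × ι => q.1 < q.2), |c q.1 q.2|) * ‖U - V‖ := by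
  rw [fusionPenalty, fusionPenalty, ← sum_sub_distrib, mul_sum, sum_mul]
  refine (abs_sum_le_sum_abs _ _).trans (sum_le_sum fun q _ => ?_)
  have hdiff : s (U q.1 - U q.2 - (V q.1 - V q.2)) ≤ 2 * C * ‖U - V‖ := by
    have hcoord : ∀ i, s ((U - V) i) ≤ C * ‖U - V‖ := fun i =>
      (hC _).trans (mul_le_mul_of_nonneg_left (norm_le_pi_norm _ i) hC0)
    calc s (U q.1 - U q.2 - (V q.1 - V q.2)) = s ((U - V) q.1 - (U - V) q.2) := by
          simp only [Pi.sub_apply, sub_sub_sub_comm]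
      _ ≤ s ((U - V) q.1) + s ((U - V) q.2) := map_sub_le_add s _ _
      _ ≤ 2 * C * ‖U - V‖ := by linarith [hcoord q.1, hcoord q.2]
  calc |c q.1 q.2 * s (U q.1 - U q.2) - c q.1 q.2 * s (V q.1 - V q.2)|
      = |c q.1 q.2| * |s (U q.1 - U q.2) - s (V q.1 - V q.2)| := by rw [← mul_sub, abs_mul]
    _ ≤ |c q.1 q.2| * (2 * C * ‖U - V‖) :=
        mul_le_mul_of_nonneg_left ((abs_sub_map_le_sub s _ _).trans hdiff) (abs_nonneg _)
    _ = 2 * C * |c q.1 q.2| * ‖U - V‖ := by ring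

theorem norm_sub_le_of_isMinOn_fusionPenalty [NormedAddCommGroup E] [InnerProductSpace ℝ E]
    (s : Seminorm ℝ E) {C : ℝ} (hC0 : 0 ≤ C) (hC : ∀ v, s v ≤ C * ‖v‖) {γ : ℝ} (hγ : 0 ≤ γ)
    {w w' : ι → ι → ℝ} (hw : ∀ i j, 0 ≤ w i j) (hw' : ∀ i j, 0 ≤ w' i j)
    {x U U' : PiLp 2 fun _ : ι => E}
    (hU : IsMinOn (proxObjective (fun V => γ * fusionPenalty s w V.ofLp) x) Set.univ U)
    (hU' : IsMinOn (proxObjective (fun V => γ * fusionPenalty s w' V.ofLp) x) Set.univ U') :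
    ‖U'.ofLp - U.ofLp‖ ≤
      4 * γ * C * ∑ q ∈ univ.filter (fun q : ι × ι => q.1 < q.2), |(w' - w) q.1 q.2| := by
  have hconvex {c : ι → ι → ℝ} (hc : ∀ i j, 0 ≤ c i j) :
      ConvexOn ℝ Set.univ fun V : PiLp 2 (fun _ : ι => E) => γ * fusionPenalty s c V.ofLp :=
    ((convexOn_fusionPenalty s hc).comp_linearMap
      (WithLp.linearEquiv 2 ℝ (ι → E)).toLinearMap).smul hγ
  have hofLp (a b : PiLp 2 fun _ : ι => E) : ‖a.ofLp - b.ofLp‖ ≤ ‖a - b‖ := by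
    simpa [dist_eq_norm] using (PiLp.lipschitzWith_ofLp 2 _).dist_le_mul a b
  refine (hofLp U' U).trans <| (norm_sub_le_of_isMinOn_proxObjective (hconvex hw') (hconvex hw)
    hU' hU (L := γ * (2 * C * ∑ q ∈ univ.filter (fun q : ι × ι => q.1 < q.2),
      |(w' - w) q.1 q.2|))
    (by positivity) ?_).trans_eq (by ring)
  rw [← mul_sub, ← mul_sub, fusionPenalty_sub, fusionPenalty_sub, ← mul_sub, mul_assoc]
  refine mul_le_mul_of_nonneg_left ?_ hγ
  calc _ ≤ _ := le_abs_self _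
    _ ≤ _ := abs_fusionPenalty_sub_le s hC0 hC _ _ _
    _ ≤ _ := by
      gcongr
      rw [norm_sub_rev]
      exact hofLp _ _

end FusionPenalty

theorem stmt_2_general {n p : ℕ} (x : Fin n → EuclideanSpace ℝ (Fin p))
    (N : EuclideanSpace ℝ (Fin p) → ℝ)
    (hN2 : ∀ (a : ℝ) v, N (a • v) = |a| * N v)
    (hN3 : ∀ u v, N (u + v) ≤ N u + N v)
    (γ : ℝ) (hγ : 0 < γ)
    (F : (Fin n → Fin n → ℝ) → (Fin n → EuclideanSpace ℝ (Fin p)) → ℝ)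
    (hF : ∀ w U, F w U = (1/2) * ∑ i, ‖x i - U i‖^2 +
      γ * ∑ q ∈ Finset.univ.filter (fun q : Fin n × Fin n => q.1 < q.2),
        w q.1 q.2 * N (U q.1 - U q.2))
    (Usol : (Fin n → Fin n → ℝ) → (Fin n → EuclideanSpace ℝ (Fin p)))
    (hUsol : ∀ w ∈ {w : Fin n → Fin n → ℝ | ∀ i j, 0 ≤ w i j},
      ∀ V, F w (Usol w) ≤ F w V) :
    ContinuousOn Usol {w : Fin n → Fin n → ℝ | ∀ i j, 0 ≤ w i j} := by
  let s : Seminorm ℝ (EuclideanSpace ℝ (Fin p)) :=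
    Seminorm.of N hN3 fun a v => by rw [hN2, Real.norm_eq_abs]
  have hs : ⇑s = N := rfl
  obtain ⟨C, hC0, hC⟩ := s.bound_of_continuous_normedSpace
    (continuousOn_univ.mp (s.convexOn.continuousOn isOpen_univ))
  have hmin (w) (hw : ∀ i j, 0 ≤ w i j) :
      IsMinOn (proxObjective (fun V : PiLp 2 (fun _ : Fin n => EuclideanSpace ℝ (Fin p)) =>
        γ * fusionPenalty s w V.ofLp) (WithLp.toLp 2 x)) Set.univ (WithLp.toLp 2 (Usol w)) := by
    have hF' (U) : proxObjective (fun V : PiLp 2 (fun _ : Fin n => EuclideanSpace ℝ (Fin p)) =>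
        γ * fusionPenalty s w V.ofLp) (WithLp.toLp 2 x) (WithLp.toLp 2 U) = F w U := by
      rw [hF, proxObjective, PiLp.norm_sq_eq_of_L2]
      simp only [fusionPenalty, PiLp.sub_apply, hs]
      ring
    intro V _
    simpa [hF'] using hUsol w hw V.ofLp
  exact continuousOn_of_norm_sub_le
    (fun w w' => 4 * γ * C * ∑ q ∈ univ.filter (fun q : Fin n × Fin n => q.1 < q.2),
      |(w' - w) q.1 q.2|) (by fun_prop) (by simp) fun w hw w' hw' =>
    norm_sub_le_of_isMinOn_fusionPenalty s hC0.le hC hγ.le hw hw' (hmin w hw) (hmin w' hw')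

/-- for fixed γ > 0, the unique minimizer of F_γ depends continuously
on the weight vector w ∈ [0,∞)^{n(n−1)/2}. -/
theorem stmt_2 {n p : ℕ} (x : Fin n → EuclideanSpace ℝ (Fin p))
    (N : EuclideanSpace ℝ (Fin p) → ℝ)
    (hN1 : ∀ v, N v = 0 ↔ v = 0)
    (hN2 : ∀ (a : ℝ) v, N (a • v) = |a| * N v)
    (hN3 : ∀ u v, N (u + v) ≤ N u + N v)
    (γ : ℝ) (hγ : 0 < γ)
    (F : (Fin n → Fin n → ℝ) → (Fin n → EuclideanSpace ℝ (Fin p)) → ℝ)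
    (hF : ∀ w U, F w U = (1/2) * ∑ i, ‖x i - U i‖^2 +
      γ * ∑ q ∈ Finset.univ.filter (fun q : Fin n × Fin n => q.1 < q.2),
        w q.1 q.2 * N (U q.1 - U q.2))
    (Usol : (Fin n → Fin n → ℝ) → (Fin n → EuclideanSpace ℝ (Fin p)))
    (hUsol : ∀ w ∈ {w : Fin n → Fin n → ℝ | ∀ i j, 0 ≤ w i j},
      ∀ V, F w (Usol w) ≤ F w V) :
    ContinuousOn Usol {w : Fin n → Fin n → ℝ | ∀ i j, 0 ≤ w i j} :=
  stmt_2_general x N hN2 hN3 γ hγ F hF Usol hUsol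
end

section
/- The largest eigenvalue of the Laplacian L of a simple graph on n nodes satisfies ρ(L) ≤ max{ d(i) + d(j) : (i,j) ∈ E }, where d(i) is the degree of node i; in particular ρ(L) ≤ n, with equality when the graph is complete. -/
/-!
Let `v` be an eigenvector of `L` for `μ`, let `i` maximise `|v|` and let `j` maximise `|v|` on the
neighbours of `i`. The row equations at `i` and `j` give `(μ - dᵢ)|vᵢ| ≤ dᵢ|vⱼ|` and
`(μ - dⱼ)|vⱼ| ≤ dⱼ|vᵢ|`, and multiplying them forces `μ ≤ dᵢ + dⱼ` (if `i` is isolated, `μ = 0`).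

For `μ ≤ n`, compare quadratic forms: `vᵀ L_G v ≤ vᵀ L_K v = n‖v‖² - (∑ v)²` for the complete
graph `K`, since `L_K = nI - J`. The same identity shows that every nonzero `u` with `∑ u = 0`
is an eigenvector of `L_K` for `n`.
-/

open Finset Matrix

theorem le_add_of_sub_mul_le_of_sub_mul_le {R : Type*} [CommRing R] [LinearOrder R]
    [IsStrictOrderedRing R] {μ a b x y : R} (hx : 0 < x) (hy : 0 ≤ y)
    (h₁ : (μ - a) * x ≤ a * y) (h₂ : (μ - b) * y ≤ b * x) : μ ≤ a + b := by
  by_contra! h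
  rcases hy.eq_or_lt with rfl | hy
  · nlinarith
  · nlinarith [mul_pos hx hy]

namespace SimpleGraph

variable {V : Type*} [Fintype V] [DecidableEq V]

theorem lapMatrix_top_mulVec {R : Type*} [CommRing R] (v : V → R) :
    (⊤ : SimpleGraph V).lapMatrix R *ᵥ v = (Fintype.card V : R) • v - (∑ i, v i) • 1 := by
  ext a
  rw [lapMatrix_mulVec_apply, ← card_neighborFinset_eq_degree, neighborFinset_top,
    ← sum_compl_add_sum {a}, card_compl, card_singleton]
  simp only [Pi.sub_apply, Pi.smul_apply, Pi.one_apply, smul_eq_mul, sum_singleton]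
  rw [Nat.cast_sub (Fintype.card_pos_iff.mpr ⟨a⟩), Nat.cast_one]
  ring

theorem exists_ne_zero_lapMatrix_top_mulVec_eq_card_smul (R : Type*) [CommRing R] [Nontrivial R]
    [Nontrivial V] : ∃ u : V → R, u ≠ 0 ∧
      (⊤ : SimpleGraph V).lapMatrix R *ᵥ u = (Fintype.card V : R) • u := by
  obtain ⟨a, b, hab⟩ := exists_pair_ne V
  refine ⟨Pi.single a 1 - Pi.single b 1, fun h => ?_, ?_⟩
  · simpa [hab] using congrFun h a
  · simp [lapMatrix_top_mulVec, sum_sub_distrib]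

theorem dotProduct_lapMatrix_mulVec_mono {G H : SimpleGraph V} [DecidableRel G.Adj]
    [DecidableRel H.Adj] (hGH : G ≤ H) (v : V → ℝ) :
    v ⬝ᵥ (G.lapMatrix ℝ *ᵥ v) ≤ v ⬝ᵥ (H.lapMatrix ℝ *ᵥ v) := by
  simp only [← toLinearMap₂'_apply', lapMatrix_toLinearMap₂']
  gcongr with i _ j _
  split_ifs with hG hH
  · exact le_rfl
  · exact absurd (hGH hG) hH
  · exact sq_nonneg _
  · exact le_rfl

variable (G : SimpleGraph V) [DecidableRel G.Adj]

theorem dotProduct_lapMatrix_mulVec_le_card_mul (v : V → ℝ) :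
    v ⬝ᵥ (G.lapMatrix ℝ *ᵥ v) ≤ Fintype.card V * (v ⬝ᵥ v) :=
  calc v ⬝ᵥ (G.lapMatrix ℝ *ᵥ v) ≤ v ⬝ᵥ ((⊤ : SimpleGraph V).lapMatrix ℝ *ᵥ v) :=
        dotProduct_lapMatrix_mulVec_mono le_top v
    _ = Fintype.card V * (v ⬝ᵥ v) - (∑ i, v i) ^ 2 := by
        rw [lapMatrix_top_mulVec, dotProduct_sub, dotProduct_smul, dotProduct_smul,
          dotProduct_one, smul_eq_mul, smul_eq_mul, sq]
    _ ≤ Fintype.card V * (v ⬝ᵥ v) := sub_le_self _ (sq_nonneg _)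

section Eigenvector

variable {G} {μ : ℝ} {v : V → ℝ}

theorem eigenvalue_le_card (heig : G.lapMatrix ℝ *ᵥ v = μ • v) (hv : v ≠ 0) :
    μ ≤ Fintype.card V := by
  have hpos : 0 < v ⬝ᵥ v := by simpa using dotProduct_self_star_pos_iff.mpr hv
  refine le_of_mul_le_mul_right ?_ hpos
  calc μ * (v ⬝ᵥ v) = v ⬝ᵥ (G.lapMatrix ℝ *ᵥ v) := by rw [heig, dotProduct_smul, smul_eq_mul]
    _ ≤ Fintype.card V * (v ⬝ᵥ v) := G.dotProduct_lapMatrix_mulVec_le_card_mul v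

theorem abs_sub_degree_mul_le_of_forall_adj_abs_le (heig : G.lapMatrix ℝ *ᵥ v = μ • v)
    {i : V} {M : ℝ} (hM : ∀ j, G.Adj i j → |v j| ≤ M) : |μ - G.degree i| * |v i| ≤ G.degree i * M := by
  have hrow : (μ - G.degree i) * v i = -∑ j ∈ G.neighborFinset i, v j := by
    have := congrFun heig i
    rw [lapMatrix_mulVec_apply, Pi.smul_apply, smul_eq_mul] at this
    linarith
  calc |μ - G.degree i| * |v i| = |∑ j ∈ G.neighborFinset i, v j| := by
        rw [← abs_mul, hrow, abs_neg]
    _ ≤ ∑ j ∈ G.neighborFinset i, |v j| := abs_sum_le_sum_abs _ _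
    _ ≤ #(G.neighborFinset i) • M :=
        sum_le_card_nsmul _ _ _ fun j hj => hM j ((mem_neighborFinset _ _ _).mp hj)
    _ = G.degree i * M := by rw [card_neighborFinset_eq_degree, nsmul_eq_mul]

theorem eigenvalue_le_sup_degree_add_degree (heig : G.lapMatrix ℝ *ᵥ v = μ • v) (hv : v ≠ 0) :
    μ ≤ (univ.sup (fun q : V × V =>
        if G.Adj q.1 q.2 then G.degree q.1 + G.degree q.2 else 0) : ℕ) := by
  obtain ⟨k, hk⟩ := Function.ne_iff.mp hv
  have : Nonempty V := ⟨k⟩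
  obtain ⟨i, hi⟩ := Finite.exists_max fun k => |v k|
  have hvi : 0 < |v i| := (abs_pos.mpr hk).trans_le (hi k)
  by_cases hiso : G.IsIsolated i
  · have h := abs_sub_degree_mul_le_of_forall_adj_abs_le heig (M := 0) fun j hj => (hiso j hj).elim
    rw [hiso.degree_eq_zero, Nat.cast_zero, zero_mul, sub_zero] at h
    have hμ : μ = 0 :=
      abs_eq_zero.mp (le_antisymm (nonpos_of_mul_nonpos_left h hvi) (abs_nonneg _))
    rw [hμ]
    positivity
  · obtain ⟨j, hij, hj⟩ := exists_max_image (G.neighborFinset i) (fun k => |v k|)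
      (by simpa [IsIsolated] using hiso)
    rw [mem_neighborFinset] at hij
    have hrow_i : (μ - G.degree i) * |v i| ≤ G.degree i * |v j| :=
      (mul_le_mul_of_nonneg_right (le_abs_self _) hvi.le).trans
        (abs_sub_degree_mul_le_of_forall_adj_abs_le heig fun k hk =>
          hj k ((mem_neighborFinset _ _ _).mpr hk))
    have hrow_j : (μ - G.degree j) * |v j| ≤ G.degree j * |v i| :=
      (mul_le_mul_of_nonneg_right (le_abs_self _) (abs_nonneg _)).trans
        (abs_sub_degree_mul_le_of_forall_adj_abs_le heig fun k _ => hi k)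
    have hμ : μ ≤ G.degree i + G.degree j :=
      le_add_of_sub_mul_le_of_sub_mul_le hvi (abs_nonneg _) hrow_i hrow_j
    have hedge := le_sup (f := fun q : V × V =>
      if G.Adj q.1 q.2 then G.degree q.1 + G.degree q.2 else 0) (mem_univ (i, j))
    rw [if_pos hij] at hedge
    exact hμ.trans (mod_cast hedge)

end Eigenvector

end SimpleGraph

/-- every eigenvalue μ of the Laplacian L of a simple graph satisfies
μ ≤ max{d(i)+d(j) : (i,j) ∈ E}; in particular μ ≤ n, with equality attained (n is an
eigenvalue) when the graph is complete (on at least two nodes). -/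
theorem stmt_16 {n : ℕ} (G : SimpleGraph (Fin n)) [DecidableRel G.Adj]
    (μ : ℝ) (v : Fin n → ℝ) (hv : v ≠ 0)
    (heig : (G.lapMatrix ℝ) *ᵥ v = μ • v) :
    μ ≤ (Finset.univ.sup (fun q : Fin n × Fin n =>
        if G.Adj q.1 q.2 then G.degree q.1 + G.degree q.2 else 0) : ℕ) ∧
    μ ≤ n ∧
    (2 ≤ n → G = ⊤ → ∃ u : Fin n → ℝ, u ≠ 0 ∧ (G.lapMatrix ℝ) *ᵥ u = (n : ℝ) • u) := by
  refine ⟨SimpleGraph.eigenvalue_le_sup_degree_add_degree heig hv, ?_, fun hn hG => ?_⟩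
  · simpa using SimpleGraph.eigenvalue_le_card heig hv
  · subst hG
    have : Nontrivial (Fin n) := Fin.nontrivial_iff_two_le.mpr hn
    obtain ⟨u, hu, hLu⟩ :=
      SimpleGraph.exists_ne_zero_lapMatrix_top_mulVec_eq_card_smul (V := Fin n) ℝ
    rw [Fintype.card_fin] at hLu
    -- `convert` identifies the given `DecidableRel ⊤.Adj` instance with the canonical one
    exact ⟨u, hu, by convert hLu⟩
end
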